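/- arXiv:1503.00308 — 14 statements merged into one kernel-verified Lean document; each statement's English description precedes it below -/
import Mathlib

section
/- Let N be a proper submodule of an R-module M. Then N is a 2-absorbing primary submodule of M if and only if for every a,b ∈ R with ab ∉ (N :_R M), either (N :_M ab) ⊆ (M-rad(N) :_M a) or (N :_M ab) ⊆ (M-rad(N) :_M b). -/
open Submodule

variable {R : Type*} [CommRing R] {M : Type*} [AddCommGroup M] [Module R M]

/-- A prime submodule: proper, and `a • m ∈ P` implies `m ∈ P` or `a • ⊤ ≤ P`. -/
def IsPrimeSubmodule (P : Submodule R M) : Prop :=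
  P ≠ ⊤ ∧ ∀ (a : R) (m : M), a • m ∈ P → m ∈ P ∨ a ∈ P.colon ⊤

/-- The `M`-radical of `N`: intersection of prime submodules containing `N`
(equal to `⊤` when there are none). -/
def mRad (N : Submodule R M) : Submodule R M :=
  sInf {P : Submodule R M | IsPrimeSubmodule P ∧ N ≤ P}

/-- 2-absorbing primary submodule. -/
def Is2AbsorbingPrimary (N : Submodule R M) : Prop :=
  N ≠ ⊤ ∧ ∀ (a b : R) (m : M), (a * b) • m ∈ N →
    a • m ∈ mRad N ∨ b • m ∈ mRad N ∨ a * b ∈ N.colon ⊤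

/-- Multiplication module: every submodule is `I • ⊤` for some ideal `I`. -/
def IsMultiplicationModule (R M : Type*) [CommRing R] [AddCommGroup M] [Module R M] : Prop :=
  ∀ N : Submodule R M, ∃ I : Ideal R, N = I • (⊤ : Submodule R M)

/-- Primary submodule. -/
def IsPrimarySubmodule (P : Submodule R M) : Prop :=
  P ≠ ⊤ ∧ ∀ (a : R) (m : M), a • m ∈ P → m ∈ P ∨ a ∈ (P.colon ⊤).radical

/-- 2-absorbing primary ideal. -/
def Is2AbsorbingPrimaryIdeal {R : Type*} [CommRing R] (I : Ideal R) : Prop :=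
  I ≠ ⊤ ∧ ∀ a b c : R, a * b * c ∈ I → a * b ∈ I ∨ a * c ∈ I.radical ∨ b * c ∈ I.radical

/-- 2-absorbing submodule. -/
def Is2AbsorbingSubmodule (K : Submodule R M) : Prop :=
  K ≠ ⊤ ∧ ∀ (a b : R) (m : M), (a * b) • m ∈ K →
    a * b ∈ K.colon ⊤ ∨ a • m ∈ K ∨ b • m ∈ K

theorem stmt0 (N : Submodule R M) (hN : N ≠ ⊤) :
    Is2AbsorbingPrimary N ↔
      ∀ a b : R, a * b ∉ N.colon ⊤ →
        (∀ m : M, (a * b) • m ∈ N → a • m ∈ mRad N) ∨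
        (∀ m : M, (a * b) • m ∈ N → b • m ∈ mRad N) := by
  constructor
  · rintro ⟨-, h2⟩ a b hab
    by_contra hc
    push_neg at hc
    obtain ⟨⟨m1, hm1, ha1⟩, ⟨m2, hm2, hb2⟩⟩ := hc
    have hb1 : b • m1 ∈ mRad N := by
      rcases h2 a b m1 hm1 with h | h | h
      · exact absurd h ha1
      · exact h
      · exact absurd h hab
    have ha2 : a • m2 ∈ mRad N := by
      rcases h2 a b m2 hm2 with h | h | h
      · exact h
      · exact absurd h hb2
      · exact absurd h hab
    rcases h2 a b (m1 + m2) (by rw [smul_add]; exact N.add_mem hm1 hm2) with h | h | h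
    · apply ha1
      have := (mRad N).sub_mem h ha2
      simpa [smul_add] using this
    · apply hb2
      have hbs : b • (m1 + m2) - b • m1 = b • m2 := by rw [smul_add]; abel
      have := (mRad N).sub_mem h hb1
      rwa [hbs] at this
    · exact hab h
  · intro h
    refine ⟨hN, fun a b m hm => ?_⟩
    by_cases hab : a * b ∈ N.colon ⊤
    · exact Or.inr (Or.inr hab)
    · rcases h a b hab with h' | h'
      · exact Or.inl (h' m hm)
      · exact Or.inr (Or.inl (h' m hm))
end

section
/- Let M be a finitely generated multiplication R-module. Then for any submodule N of M, √(N :_R M) = (M-rad(N) :_R M). -/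
/-!
For a prime submodule `P` the ideal `(P : M)` is prime, which gives `√(N : M) ≤ (M-rad N : M)`.
Conversely, let `p` be a prime ideal containing `(N : M)`. In a finitely generated module the
determinant trick gives `(p • M : M) = p`, and in a multiplication module this makes `p • M` a
prime submodule; it contains `N = (N : M) • M`, hence `M-rad N`, so `(M-rad N : M) ≤ p`.
-/

open Submodule

variable {R : Type*} [CommRing R] {M : Type*} [AddCommGroup M] [Module R M]

theorem IsPrimeSubmodule.isPrime_colon {P : Submodule R M} (hP : IsPrimeSubmodule P) :
    (P.colon ⊤).IsPrime where
  ne_top' h := hP.1 <| eq_top_iff.mpr fun m _ => by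
    simpa using mem_colon.mp ((Ideal.eq_top_iff_one _).mp h) m trivial
  mem_or_mem' {a b} hab := by
    refine or_iff_not_imp_left.mpr fun ha => mem_colon.mpr fun m _ => ?_
    have habm : a • b • m ∈ P := by simpa [mul_smul] using mem_colon.mp hab m trivial
    exact (hP.2 a (b • m) habm).resolve_right ha

theorem radical_colon_top_le_colon_top_mRad (N : Submodule R M) :
    (N.colon ⊤).radical ≤ (mRad N).colon ⊤ := by
  refine fun x hx => mem_colon.mpr fun m _ => mem_sInf.mpr ?_
  rintro P ⟨hP, hNP⟩
  have hxP : x ∈ P.colon ⊤ :=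
    hP.isPrime_colon.radical_le_iff.mpr (colon_mono hNP le_rfl) hx
  exact mem_colon.mp hxP m trivial

theorem annihilator_le_colon_top (N : Submodule R M) : Module.annihilator R M ≤ N.colon ⊤ :=
  fun r hr => mem_colon.mpr fun m _ => by
    rw [Module.mem_annihilator.mp hr m]
    exact N.zero_mem

/-- The determinant trick: `x • M ⊆ I • M` yields a monic relation for `x` acting on `M` whose
lower coefficients lie in `I`. -/
theorem colon_top_smul_top_le_radical [Module.Finite R M] (I : Ideal R) :
    (I • ⊤ : Submodule R M).colon ⊤ ≤ (I ⊔ Module.annihilator R M).radical := by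
  intro x hx
  have hrange : LinearMap.range (algebraMap R (Module.End R M) x) ≤ I • ⊤ := by
    rintro _ ⟨m, rfl⟩
    exact mem_colon.mp hx m trivial
  obtain ⟨q, hq, -, hcoeff, hqx⟩ :=
    LinearMap.exists_monic_and_natDegree_eq_and_coeff_mem_pow_and_aeval_eq_zero R _ I hrange
  have heval : q.eval x ∈ Module.annihilator R M := by
    rw [Polynomial.aeval_algebraMap_apply] at hqx
    exact Module.mem_annihilator.mpr fun m => by
      simpa using LinearMap.congr_fun hqx m
  have hlower : ∑ i ∈ Finset.range q.natDegree, q.coeff i * x ^ i ∈ I :=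
    Ideal.sum_mem _ fun i hi => I.mul_mem_right _ <|
      Ideal.pow_le_self (Nat.sub_ne_zero_of_lt (Finset.mem_range.mp hi)) (hcoeff i)
  have hsplit : q.eval x = x ^ q.natDegree + ∑ i ∈ Finset.range q.natDegree, q.coeff i * x ^ i := by
    conv_lhs => rw [hq.as_sum]
    simp [Polynomial.eval_finsetSum]
  refine ⟨q.natDegree, ?_⟩
  rw [show x ^ q.natDegree = q.eval x - ∑ i ∈ Finset.range q.natDegree, q.coeff i * x ^ i by
    rw [hsplit]; ring]
  exact Ideal.sub_mem _ (Ideal.mem_sup_right heval) (Ideal.mem_sup_left hlower)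

theorem colon_top_smul_top_le_of_isPrime [Module.Finite R M] {p : Ideal R} (hp : p.IsPrime)
    (hann : Module.annihilator R M ≤ p) : (p • ⊤ : Submodule R M).colon ⊤ ≤ p := by
  simpa [sup_eq_left.mpr hann, hp.radical] using colon_top_smul_top_le_radical (M := M) p

namespace IsMultiplicationModule

theorem colon_top_smul_top (hM : IsMultiplicationModule R M) (N : Submodule R M) :
    N.colon ⊤ • (⊤ : Submodule R M) = N := by
  refine le_antisymm (smul_le.mpr fun r hr m _ => mem_colon.mp hr m trivial) ?_
  obtain ⟨I, rfl⟩ := hM N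
  exact smul_mono_left fun r hr => mem_colon.mpr fun m _ => smul_mem_smul hr trivial

theorem isPrimeSubmodule_smul_top [Module.Finite R M] (hM : IsMultiplicationModule R M)
    {p : Ideal R} (hp : p.IsPrime) (hann : Module.annihilator R M ≤ p) :
    IsPrimeSubmodule (p • ⊤ : Submodule R M) := by
  have hcolon := colon_top_smul_top_le_of_isPrime hp hann
  refine ⟨fun htop => hp.ne_top <| top_le_iff.mp ?_, fun a m ham => ?_⟩
  · simpa [htop] using hcolon
  by_cases ha : a ∈ p
  · exact .inr <| mem_colon.mpr fun m' _ => smul_mem_smul ha trivial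
  refine .inl ?_
  have hspan : (span R {m}).colon ⊤ ≤ p := fun j hj =>
    (hp.mem_or_mem <| hcolon <| mem_colon.mpr fun m' _ => by
      obtain ⟨r, hr⟩ := mem_span_singleton.mp (mem_colon.mp hj m' trivial)
      rw [mul_smul, ← hr, smul_comm]
      exact smul_mem _ r ham).resolve_left ha
  have hle : span R {m} ≤ p • ⊤ := by
    rw [← hM.colon_top_smul_top (span R {m})]
    exact smul_mono_left hspan
  exact hle (mem_span_singleton_self m)

theorem colon_top_mRad_le_radical [Module.Finite R M] (hM : IsMultiplicationModule R M)
    (N : Submodule R M) : (mRad N).colon ⊤ ≤ (N.colon ⊤).radical := by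
  rw [Ideal.radical_eq_sInf]
  refine le_sInf fun p ⟨hNp, hp⟩ => ?_
  have hann : Module.annihilator R M ≤ p := (annihilator_le_colon_top N).trans hNp
  have hN : N ≤ p • ⊤ := hM.colon_top_smul_top N ▸ smul_mono_left hNp
  have hrad : mRad N ≤ p • ⊤ := sInf_le ⟨hM.isPrimeSubmodule_smul_top hp hann, hN⟩
  exact (colon_mono hrad le_rfl).trans (colon_top_smul_top_le_of_isPrime hp hann)

end IsMultiplicationModule

theorem stmt2 [Module.Finite R M] (hM : IsMultiplicationModule R M)
    (N : Submodule R M) :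
    (N.colon ⊤).radical = (mRad N).colon ⊤ :=
  le_antisymm (radical_colon_top_le_colon_top_mRad N) (hM.colon_top_mRad_le_radical N)
end

section
/- Let M be a finitely generated multiplication R-module and N a submodule of M. Then M-rad(N) is a primary submodule of M if and only if M-rad(N) is a prime submodule of M. -/
open Submodule

variable {R : Type*} [CommRing R] {M : Type*} [AddCommGroup M] [Module R M]

lemma prime_colon_of_pow {P : Submodule R M} (hP : IsPrimeSubmodule P) {a : R} :
    ∀ {n : ℕ}, a ^ n ∈ P.colon ⊤ → a ∈ P.colon ⊤ := by
  intro n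
  induction n with
  | zero =>
    intro h
    exfalso
    apply hP.1
    rw [eq_top_iff]
    intro m _
    simpa using Submodule.mem_colon.mp h m trivial
  | succ n ih =>
    intro h
    by_cases hc : a ∈ P.colon ⊤
    · exact hc
    · apply ih
      rw [Submodule.mem_colon]
      intro m _
      have h1 : a ^ (n + 1) • m ∈ P := Submodule.mem_colon.mp h m trivial
      have h2 : a • (a ^ n • m) ∈ P := by
        rw [← mul_smul, ← pow_succ']; exact h1
      rcases hP.2 a (a ^ n • m) h2 with h3 | h3
      · exact h3
      · exact absurd h3 hc

lemma mRad_colon_radical {N : Submodule R M} {a : R}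
    (h : a ∈ ((mRad N).colon ⊤).radical) : a ∈ (mRad N).colon ⊤ := by
  obtain ⟨n, hn⟩ := h
  rw [Submodule.mem_colon]
  intro m _
  rw [mRad, Submodule.mem_sInf]
  rintro P ⟨hP, hNP⟩
  have hPn : a ^ n ∈ P.colon ⊤ := by
    rw [Submodule.mem_colon]
    intro p hp
    have := Submodule.mem_colon.mp hn p hp
    rw [mRad, Submodule.mem_sInf] at this
    exact this P ⟨hP, hNP⟩
  exact Submodule.mem_colon.mp (prime_colon_of_pow hP hPn) m trivial

theorem stmt4 [Module.Finite R M] (hM : IsMultiplicationModule R M)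
    (N : Submodule R M) :
    IsPrimarySubmodule (mRad N) ↔ IsPrimeSubmodule (mRad N) := by
  constructor
  · rintro ⟨h1, h2⟩
    refine ⟨h1, fun a m hm => ?_⟩
    rcases h2 a m hm with h | h
    · exact Or.inl h
    · exact Or.inr (mRad_colon_radical h)
  · rintro ⟨h1, h2⟩
    exact ⟨h1, fun a m hm => (h2 a m hm).imp id fun h => Ideal.le_radical h⟩
end

section
/- Let M be an R-module and N a submodule of M. If M-rad(N) is a prime submodule of M, then N is a 2-absorbing primary submodule of M. -/
open Submodule

variable {R : Type*} [CommRing R] {M : Type*} [AddCommGroup M] [Module R M]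

theorem stmt7 (N : Submodule R M) (h : IsPrimeSubmodule (mRad N)) :
    Is2AbsorbingPrimary N := by
  have hle : N ≤ mRad N := le_sInf fun P hP => hP.2
  constructor
  · intro hN
    exact h.1 (top_le_iff.mp (hN ▸ hle))
  · intro a b m habm
    have h1 : a • (b • m) ∈ mRad N := by
      rw [← mul_smul]; exact hle habm
    rcases h.2 a (b • m) h1 with h2 | h2
    · exact Or.inr (Or.inl h2)
    · exact Or.inl ((Submodule.mem_colon.mp h2) m trivial)
end

section
/- Let M be a finitely generated multiplication R-module and N a submodule. If M-rad(N) is a primary submodule of M, then N is a 2-absorbing primary submodule of M. -/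
open Submodule

variable {R : Type*} [CommRing R] {M : Type*} [AddCommGroup M] [Module R M]

/-- In a prime submodule, `a ^ k • y ∈ P` forces `a • y ∈ P`. -/
lemma prime_pow_smul_mem {P : Submodule R M} (hP : IsPrimeSubmodule P) (a : R) :
    ∀ (k : ℕ) (y : M), a ^ k • y ∈ P → a • y ∈ P := by
  intro k
  induction k with
  | zero => intro y hy; exact P.smul_mem a (by simpa using hy)
  | succ k ih =>
    intro y hy
    rw [pow_succ, mul_smul] at hy
    have h2 := ih (a • y) hy
    rcases hP.2 a (a • y) h2 with h' | h'
    · exact h'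
    · exact Submodule.mem_colon.mp h' y trivial

theorem stmt8 [Module.Finite R M] (hM : IsMultiplicationModule R M)
    (N : Submodule R M) (h : IsPrimarySubmodule (mRad N)) :
    Is2AbsorbingPrimary N := by
  have hle : N ≤ mRad N := le_sInf fun P hP => hP.2
  refine ⟨fun hN => h.1 (top_le_iff.mp (hN ▸ hle)), ?_⟩
  -- `mRad N` is in fact prime
  have key : ∀ (a : R) (m : M), a • m ∈ mRad N → m ∈ mRad N ∨ a ∈ (mRad N).colon ⊤ := by
    intro a m hm
    rcases h.2 a m hm with h1 | h1
    · exact Or.inl h1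
    · right
      obtain ⟨n, hn⟩ := Ideal.mem_radical_iff.mp h1
      rw [Submodule.mem_colon]
      intro x _
      rw [mRad, Submodule.mem_sInf]
      rintro P ⟨hP, hNP⟩
      have hx : a ^ n • x ∈ P := by
        have := Submodule.mem_colon.mp hn x trivial
        exact (sInf_le (show P ∈ {P : Submodule R M | IsPrimeSubmodule P ∧ N ≤ P} from ⟨hP, hNP⟩)) this
      exact prime_pow_smul_mem hP a n x hx
  intro a b m habm
  have h1 : a • (b • m) ∈ mRad N := by
    rw [← mul_smul]; exact hle habm
  rcases key a (b • m) h1 with h2 | h2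
  · exact Or.inr (Or.inl h2)
  · exact Or.inl (Submodule.mem_colon.mp h2 m trivial)
end

section
/- If M is a divided R-module, then every proper submodule of M is a 2-absorbing primary submodule of M. -/
open Submodule

variable {R : Type*} [CommRing R] {M : Type*} [AddCommGroup M] [Module R M]

/-- Divided module: every prime submodule `P` satisfies `P ⊆ Rm` for all `m ∉ P`. -/
def IsDividedModule (R M : Type*) [CommRing R] [AddCommGroup M] [Module R M] : Prop :=
  ∀ P : Submodule R M, IsPrimeSubmodule P → ∀ m : M, m ∉ P → P ≤ Submodule.span R {m}

theorem IsDividedModule.isChain_isPrimeSubmodule (hM : IsDividedModule R M) :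
    IsChain (· ≤ ·) {P : Submodule R M | IsPrimeSubmodule P} := by
  intro P hP Q hQ _
  by_cases hPQ : P ≤ Q
  · exact Or.inl hPQ
  · obtain ⟨p, hpP, hpQ⟩ := Set.not_subset.mp hPQ
    exact Or.inr ((hM Q hQ p hpQ).trans ((span_singleton_le_iff_mem p P).mpr hpP))

theorem IsPrimeSubmodule.smul_mem_or_smul_mem {P : Submodule R M} (hP : IsPrimeSubmodule P)
    {a b : R} {m : M} (h : (a * b) • m ∈ P) : a • m ∈ P ∨ b • m ∈ P := by
  rw [mul_smul] at h
  exact (hP.2 a (b • m) h).symm.imp_left fun ha => mem_colon.mp ha m (mem_top (R := R))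

/-- If `a • m` and `b • m` escape `P₁` and `P₂`, they both escape the smaller of the two. -/
theorem smul_mem_sInf_or_smul_mem_sInf_of_isChain {S : Set (Submodule R M)}
    (hS : IsChain (· ≤ ·) S) {a b : R} {m : M}
    (habs : ∀ P ∈ S, a • m ∈ P ∨ b • m ∈ P) : a • m ∈ sInf S ∨ b • m ∈ sInf S := by
  simp only [mem_sInf]
  by_contra! ⟨⟨P₁, hP₁, haP₁⟩, ⟨P₂, hP₂, hbP₂⟩⟩
  rcases hS.total hP₁ hP₂ with hle | hle
  · exact (habs P₁ hP₁).elim haP₁ fun hb => hbP₂ (hle hb)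
  · exact (habs P₂ hP₂).elim (fun ha => haP₁ (hle ha)) hbP₂

theorem stmt9 (hM : IsDividedModule R M) (N : Submodule R M) (hN : N ≠ ⊤) :
    Is2AbsorbingPrimary N := by
  refine ⟨hN, fun a b m h => ?_⟩
  have hchain : IsChain (· ≤ ·) {P : Submodule R M | IsPrimeSubmodule P ∧ N ≤ P} :=
    hM.isChain_isPrimeSubmodule.mono fun _ hP => hP.1
  exact (smul_mem_sInf_or_smul_mem_sInf_of_isChain hchain
    fun P hP => hP.1.smul_mem_or_smul_mem (hP.2 h)).imp_right Or.inl
end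

section
/- Let S be a multiplicatively closed subset of R and M an R-module. If N is a 2-absorbing primary submodule of M and S⁻¹N ≠ S⁻¹M, then S⁻¹N is a 2-absorbing primary submodule of the S⁻¹R-module S⁻¹M. -/
/-!
A prime submodule of `S⁻¹M` pulls back along `M → S⁻¹M` to a prime submodule of `M`, so
`S⁻¹(M-rad N) ⊆ S⁻¹M-rad(S⁻¹N)`; likewise `S⁻¹(N : M) ⊆ (S⁻¹N : S⁻¹M)`. Given
`(a/s)(b/t)(m/u) ∈ S⁻¹N`, some `c ∈ S` gives `ab(cm) ∈ N`, and each of the three conclusions of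
the 2-absorbing primary property for `a, b, cm` localizes through these inclusions.
-/

open Submodule

variable {R : Type*} [CommRing R] {M : Type*} [AddCommGroup M] [Module R M]

theorem IsPrimeSubmodule.comap_restrictScalars {Rₛ : Type*} [CommRing Rₛ] [Algebra R Rₛ]
    (S : Submonoid R) [IsLocalization S Rₛ] {Mₛ : Type*} [AddCommGroup Mₛ] [Module R Mₛ]
    [Module Rₛ Mₛ] [IsScalarTower R Rₛ Mₛ] (f : M →ₗ[R] Mₛ) [IsLocalizedModule S f]
    {P : Submodule Rₛ Mₛ} (hP : IsPrimeSubmodule P) :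
    IsPrimeSubmodule ((P.restrictScalars R).comap f) := by
  have gc := (Submodule.localized'gi Rₛ S f).gc
  refine ⟨fun htop => hP.1 ?_, fun a m ham => ?_⟩
  · rw [eq_top_iff, ← Submodule.localized'_top Rₛ S f]
    exact (gc ⊤ P).2 htop.ge
  · have hfm : algebraMap R Rₛ a • f m ∈ P := by
      rw [algebraMap_smul, ← map_smul]
      exact ham
    refine (hP.2 _ _ hfm).imp id fun ha => Submodule.mem_colon.2 fun m' _ => ?_
    change f (a • m') ∈ P
    rw [map_smul, ← algebraMap_smul Rₛ]
    exact Submodule.mem_colon.1 ha (f m') trivial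

section Localization

variable {Rₛ : Type*} [CommRing Rₛ] [Algebra R Rₛ] (S : Submonoid R) [IsLocalization S Rₛ]
  {Mₛ : Type*} [AddCommGroup Mₛ] [Module R Mₛ] [Module Rₛ Mₛ] [IsScalarTower R Rₛ Mₛ]
  (f : M →ₗ[R] Mₛ) [IsLocalizedModule S f]

theorem Submodule.mk'_mem_localized'_iff (N : Submodule R M) (m : M) (s : S) :
    IsLocalizedModule.mk' f m s ∈ N.localized' Rₛ S f ↔ ∃ c : S, c • m ∈ N := by
  constructor
  · rintro ⟨n, hn, v, hv⟩
    obtain ⟨c, hc⟩ := (IsLocalizedModule.mk'_eq_mk'_iff f n m v s).1 hv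
    refine ⟨c * v, ?_⟩
    rw [mul_smul, hc, smul_smul]
    exact N.smul_of_tower_mem _ hn
  · rintro ⟨c, hc⟩
    exact ⟨c • m, hc, c * s, IsLocalizedModule.mk'_cancel_left f m c s⟩

theorem mRad_localized'_le (N : Submodule R M) :
    (mRad N).localized' Rₛ S f ≤ mRad (N.localized' Rₛ S f) := by
  have gc := (Submodule.localized'gi Rₛ S f).gc
  refine le_sInf fun P ⟨hP, hNP⟩ => (gc _ P).2 (sInf_le ⟨hP.comap_restrictScalars S f, ?_⟩)
  exact (gc N P).1 hNP

theorem map_colon_le_colon_localized' (N : Submodule R M) :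
    (N.colon ⊤).map (algebraMap R Rₛ) ≤ (N.localized' Rₛ S f).colon ⊤ := by
  refine Ideal.map_le_iff_le_comap.2 fun r hr => Submodule.mem_colon.2 fun x _ => ?_
  obtain ⟨⟨m, s⟩, rfl⟩ := IsLocalizedModule.mk'_surjective S f x
  rw [Function.uncurry_apply_pair, algebraMap_smul, ← IsLocalizedModule.mk'_smul]
  exact ⟨r • m, Submodule.mem_colon.1 hr m trivial, s, rfl⟩

theorem Is2AbsorbingPrimary.localized' {N : Submodule R M} (hN : Is2AbsorbingPrimary N)
    (hne : N.localized' Rₛ S f ≠ ⊤) : Is2AbsorbingPrimary (N.localized' Rₛ S f) := by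
  refine ⟨hne, fun A B x hABx => ?_⟩
  obtain ⟨⟨a, s⟩, rfl⟩ := IsLocalization.mk'_surjective S A
  obtain ⟨⟨b, t⟩, rfl⟩ := IsLocalization.mk'_surjective S B
  obtain ⟨⟨m, u⟩, rfl⟩ := IsLocalizedModule.mk'_surjective S f x
  simp only [Function.uncurry_apply_pair] at hABx ⊢
  rw [← IsLocalization.mk'_mul, IsLocalizedModule.mk'_smul_mk',
    Submodule.mk'_mem_localized'_iff] at hABx
  obtain ⟨c, hc⟩ := hABx
  rw [← IsLocalizedModule.mk'_cancel_left f m c u]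
  have hmRad (r : R) (v : S) (h : r • c • m ∈ mRad N) :
      IsLocalization.mk' Rₛ r v • IsLocalizedModule.mk' f (c • m) (c * u) ∈
        mRad (N.localized' Rₛ S f) := by
    rw [IsLocalizedModule.mk'_smul_mk']
    exact mRad_localized'_le S f N ⟨_, h, _, rfl⟩
  rcases hN.2 a b (c • m) (by rwa [smul_comm]) with ha | hb | hab
  · exact Or.inl (hmRad a s ha)
  · exact Or.inr (Or.inl (hmRad b t hb))
  · refine Or.inr (Or.inr (map_colon_le_colon_localized' S f N ?_))
    rw [← IsLocalization.mk'_mul, IsLocalization.mk'_mem_map_algebraMap_iff]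
    exact ⟨1, S.one_mem, by rwa [one_mul]⟩

end Localization

theorem stmt10 (S : Submonoid R) (N : Submodule R M)
    (hN : Is2AbsorbingPrimary N) (hne : N.localized S ≠ ⊤) :
    Is2AbsorbingPrimary (N.localized S) :=
  hN.localized' S _ hne
end

section
/- Let M be an R-module and N a 2-absorbing primary submodule of M. If abK ⊆ N for elements a, b ∈ R and a submodule K of M, and ab ∉ (N :_R M), then aK ⊆ M-rad(N) or bK ⊆ M-rad(N). -/
open Submodule

variable {R : Type*} [CommRing R] {M : Type*} [AddCommGroup M] [Module R M]

theorem stmt11 (N : Submodule R M) (hN : Is2AbsorbingPrimary N)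
    (a b : R) (K : Submodule R M)
    (h : ∀ k ∈ K, (a * b) • k ∈ N) (hab : a * b ∉ N.colon ⊤) :
    (∀ k ∈ K, a • k ∈ mRad N) ∨ (∀ k ∈ K, b • k ∈ mRad N) := by
  by_contra hc
  push_neg at hc
  obtain ⟨⟨k₁, hk₁K, hk₁⟩, ⟨k₂, hk₂K, hk₂⟩⟩ := hc
  have h1 := hN.2 a b k₁ (h k₁ hk₁K)
  rcases h1 with h1 | h1 | h1
  · exact hk₁ h1
  swap
  · exact hab h1
  have h2 := hN.2 a b k₂ (h k₂ hk₂K)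
  rcases h2 with h2 | h2 | h2
  swap
  · exact hk₂ h2
  swap
  · exact hab h2
  have h3 := hN.2 a b (k₁ + k₂) (h _ (K.add_mem hk₁K hk₂K))
  rcases h3 with h3 | h3 | h3
  · apply hk₁
    have : a • k₁ = a • (k₁ + k₂) - a • k₂ := by rw [smul_add]; abel
    rw [this]
    exact sub_mem h3 h2
  · apply hk₂
    have : b • k₂ = b • (k₁ + k₂) - b • k₁ := by rw [smul_add]; abel
    rw [this]
    exact sub_mem h3 h1
  · exact hab h3
end

section
/- Let M be an R-module and N a proper submodule of M. Then N is a 2-absorbing primary submodule of M if and only if whenever I₁I₂K ⊆ N for ideals I₁, I₂ of R and a submodule K of M, either I₁I₂ ⊆ (N :_R M) or I₁K ⊆ M-rad(N) or I₂K ⊆ M-rad(N). -/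
open Submodule

variable {R : Type*} [CommRing R] {M : Type*} [AddCommGroup M] [Module R M]

/-- Core step: for fixed elements `a b`, if `a*b • k ∈ N` for all `k ∈ K` and
both `a` and `b` fail to push some element of `K` into the radical, then `a*b ∈ (N : ⊤)`. -/
lemma step_ab (N : Submodule R M) (K : Submodule R M)
    (h2 : ∀ (a b : R) (m : M), (a * b) • m ∈ N →
      a • m ∈ mRad N ∨ b • m ∈ mRad N ∨ a * b ∈ N.colon ⊤)
    (a b : R) (hab : ∀ k ∈ K, (a * b) • k ∈ N)
    (ha : ∃ k ∈ K, a • k ∉ mRad N) (hb : ∃ k ∈ K, b • k ∉ mRad N) :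
    a * b ∈ N.colon ⊤ := by
  by_contra hC
  obtain ⟨k₁, hk₁K, hk₁⟩ := ha
  obtain ⟨k₂, hk₂K, hk₂⟩ := hb
  have hbk₁ : b • k₁ ∈ mRad N := by
    rcases h2 a b k₁ (hab k₁ hk₁K) with h | h | h
    · exact absurd h hk₁
    · exact h
    · exact absurd h hC
  have hak₂ : a • k₂ ∈ mRad N := by
    rcases h2 a b k₂ (hab k₂ hk₂K) with h | h | h
    · exact h
    · exact absurd h hk₂
    · exact absurd h hC
  rcases h2 a b (k₁ + k₂) (hab _ (add_mem hk₁K hk₂K)) with h | h | h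
  · rw [smul_add] at h
    exact hk₁ (by simpa using sub_mem h hak₂)
  · rw [smul_add] at h
    exact hk₂ (by simpa using sub_mem h hbk₁)
  · exact hC h

/-- Second step: fixing `b` with a witness, all of `I₁ * b` lands in the colon ideal. -/
lemma step_Ib (N : Submodule R M) (K : Submodule R M)
    (h2 : ∀ (a b : R) (m : M), (a * b) • m ∈ N →
      a • m ∈ mRad N ∨ b • m ∈ mRad N ∨ a * b ∈ N.colon ⊤)
    (I₁ : Ideal R) (b : R)
    (hab : ∀ a ∈ I₁, ∀ k ∈ K, (a * b) • k ∈ N)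
    (hI₁ : ∃ a ∈ I₁, ∃ k ∈ K, a • k ∉ mRad N)
    (hb : ∃ k ∈ K, b • k ∉ mRad N) :
    ∀ a ∈ I₁, a * b ∈ N.colon ⊤ := by
  obtain ⟨a₀, ha₀I, k₀, hk₀K, hk₀⟩ := hI₁
  intro a haI
  by_cases ha : ∃ k ∈ K, a • k ∉ mRad N
  · exact step_ab N K h2 a b (hab a haI) ha hb
  · push_neg at ha
    have haa₀ : ∃ k ∈ K, (a + a₀) • k ∉ mRad N := by
      refine ⟨k₀, hk₀K, fun h => hk₀ ?_⟩
      rw [add_smul] at h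
      simpa using sub_mem h (ha k₀ hk₀K)
    have h1 : (a + a₀) * b ∈ N.colon ⊤ :=
      step_ab N K h2 (a + a₀) b (hab _ (add_mem haI ha₀I)) haa₀ hb
    have h2' : a₀ * b ∈ N.colon ⊤ :=
      step_ab N K h2 a₀ b (hab _ ha₀I) ⟨k₀, hk₀K, hk₀⟩ hb
    have := sub_mem h1 h2'
    rwa [add_mul, add_sub_cancel_right] at this

theorem stmt12 (N : Submodule R M) (hN : N ≠ ⊤) :
    Is2AbsorbingPrimary N ↔
      ∀ (I₁ I₂ : Ideal R) (K : Submodule R M), I₁ • I₂ • K ≤ N →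
        I₁ * I₂ ≤ N.colon ⊤ ∨ I₁ • K ≤ mRad N ∨ I₂ • K ≤ mRad N := by
  constructor
  · rintro ⟨-, h2⟩ I₁ I₂ K hIK
    by_cases hK1 : I₁ • K ≤ mRad N
    · exact Or.inr (Or.inl hK1)
    by_cases hK2 : I₂ • K ≤ mRad N
    · exact Or.inr (Or.inr hK2)
    left
    rw [Submodule.smul_le] at hK1 hK2
    push_neg at hK1 hK2
    obtain ⟨a₀, ha₀I, k₀, hk₀K, hk₀⟩ := hK1
    obtain ⟨b₀, hb₀I, l₀, hl₀K, hl₀⟩ := hK2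
    have hmem : ∀ a ∈ I₁, ∀ b ∈ I₂, ∀ k ∈ K, (a * b) • k ∈ N := by
      intro a ha b hb k hk
      have : a • b • k ∈ I₁ • I₂ • K :=
        Submodule.smul_mem_smul ha (Submodule.smul_mem_smul hb hk)
      rw [mul_smul]
      exact hIK this
    rw [Ideal.mul_le]
    intro a haI b hbI
    have hI₁w : ∃ a ∈ I₁, ∃ k ∈ K, a • k ∉ mRad N := ⟨a₀, ha₀I, k₀, hk₀K, hk₀⟩
    by_cases hb : ∃ k ∈ K, b • k ∉ mRad N
    · exact step_Ib N K h2 I₁ b (fun a ha => hmem a ha b hbI) hI₁w hb a haI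
    · push_neg at hb
      have hbb₀ : ∃ k ∈ K, (b + b₀) • k ∉ mRad N := by
        refine ⟨l₀, hl₀K, fun h => hl₀ ?_⟩
        rw [add_smul] at h
        simpa using sub_mem h (hb l₀ hl₀K)
      have h1 : a * (b + b₀) ∈ N.colon ⊤ :=
        step_Ib N K h2 I₁ (b + b₀) (fun a ha => hmem a ha _ (add_mem hbI hb₀I))
          hI₁w hbb₀ a haI
      have h2' : a * b₀ ∈ N.colon ⊤ :=
        step_Ib N K h2 I₁ b₀ (fun a ha => hmem a ha b₀ hb₀I)
          hI₁w ⟨l₀, hl₀K, hl₀⟩ a haI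
      have := sub_mem h1 h2'
      rwa [mul_add, add_sub_cancel_right] at this
  · intro H
    refine ⟨hN, fun a b m habm => ?_⟩
    have hle : Ideal.span {a} • Ideal.span {b} • (span R {m} : Submodule R M) ≤ N := by
      refine Submodule.smul_le.2 fun x hx y hy => ?_
      obtain ⟨r, rfl⟩ := Submodule.mem_span_singleton.1 hx
      have hy' : y ∈ (span R {b • m} : Submodule R M) := by
        refine Submodule.smul_le.2 ?_ hy
        intro s hs t ht
        obtain ⟨u, rfl⟩ := Submodule.mem_span_singleton.1 hs
        obtain ⟨v, rfl⟩ := Submodule.mem_span_singleton.1 ht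
        refine Submodule.mem_span_singleton.2 ⟨u * v, ?_⟩
        simp only [smul_eq_mul, smul_smul]
        ring_nf
      obtain ⟨w, rfl⟩ := Submodule.mem_span_singleton.1 hy'
      have heq : (r • a) • w • b • m = (r * w) • ((a * b) • m) := by
        simp only [smul_eq_mul, smul_smul]
        ring_nf
      rw [heq]
      exact N.smul_mem _ habm
    rcases H _ _ _ hle with h | h | h
    · right; right
      exact h (Ideal.mul_mem_mul (Ideal.subset_span rfl) (Ideal.subset_span rfl))
    · left
      have : a • m ∈ Ideal.span {a} • (span R {m} : Submodule R M) :=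
        Submodule.smul_mem_smul (Ideal.subset_span rfl) (Submodule.mem_span_singleton_self m)
      exact h this
    · right; left
      have : b • m ∈ Ideal.span {b} • (span R {m} : Submodule R M) :=
        Submodule.smul_mem_smul (Ideal.subset_span rfl) (Submodule.mem_span_singleton_self m)
      exact h this
end

section
/- Let M be a multiplication R-module and N a submodule of M. If (N :_R M) is a 2-absorbing primary ideal of R, then N is a 2-absorbing primary submodule of M. -/
open Submodule

variable {R : Type*} [CommRing R] {M : Type*} [AddCommGroup M] [Module R M]

lemma rad_smul_le_mRad (N : Submodule R M) :
    (N.colon ⊤).radical • (⊤ : Submodule R M) ≤ mRad N := by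
  refine le_sInf fun P hP => ?_
  obtain ⟨⟨hPne, hPprime⟩, hNP⟩ := hP
  have hcol : (P.colon ⊤).IsPrime := by
    constructor
    · intro hc
      apply hPne
      rw [eq_top_iff]
      intro x _
      have h1 : (1 : R) ∈ P.colon ⊤ := hc ▸ trivial
      simpa using (Submodule.mem_colon.mp h1) x trivial
    · intro a b hab
      by_cases ha : a ∈ P.colon ⊤
      · exact Or.inl ha
      · refine Or.inr (Submodule.mem_colon.mpr fun x _ => ?_)
        have : a • (b • x) ∈ P := by
          rw [← mul_smul]; exact Submodule.mem_colon.mp hab x trivial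
        rcases hPprime a (b • x) this with h1 | h1
        · exact h1
        · exact absurd h1 ha
  refine Submodule.smul_le.mpr fun r hr x _ => ?_
  have hrP : r ∈ P.colon ⊤ := by
    have hle : N.colon ⊤ ≤ P.colon ⊤ := fun s hs =>
      Submodule.mem_colon.mpr fun y hy => hNP (Submodule.mem_colon.mp hs y hy)
    obtain ⟨n, hn⟩ := hr
    exact hcol.mem_of_pow_mem n (hle hn)
  exact Submodule.mem_colon.mp hrP x trivial

theorem stmt13 (hM : IsMultiplicationModule R M) (N : Submodule R M)
    (h : Is2AbsorbingPrimaryIdeal (N.colon ⊤)) :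
    Is2AbsorbingPrimary N := by
  obtain ⟨hne, h2⟩ := h
  constructor
  · intro hN
    apply hne
    rw [eq_top_iff]
    intro x _
    exact Submodule.mem_colon.mpr fun y _ => hN ▸ trivial
  intro a b m habm
  obtain ⟨I, hI⟩ := hM (Submodule.span R {m})
  have hm : m ∈ I • (⊤ : Submodule R M) := hI ▸ Submodule.mem_span_singleton_self m
  set J := (N.colon ⊤).radical with hJ
  -- every a*b*c with c ∈ I lands in the colon
  have key : ∀ c ∈ I, a * b * c ∈ N.colon ⊤ := by
    intro c hc
    refine Submodule.mem_colon.mpr fun x _ => ?_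
    have hcx : c • x ∈ Submodule.span R {m} := by
      rw [hI]; exact Submodule.smul_mem_smul hc trivial
    obtain ⟨r, hr⟩ := Submodule.mem_span_singleton.mp hcx
    have : (a * b * c) • x = r • ((a * b) • m) := by
      rw [mul_smul, ← hr, smul_comm]
    rw [this]
    exact N.smul_mem r habm
  by_cases hab : a * b ∈ N.colon ⊤
  · exact Or.inr (Or.inr hab)
  -- helper: if s * c ∈ J for all c ∈ I, then s • m ∈ mRad N
  have step : ∀ s : R, (∀ c ∈ I, s * c ∈ J) → s • m ∈ mRad N := by
    intro s hs
    refine rad_smul_le_mRad N ?_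
    refine Submodule.smul_induction_on hm (fun c hc x _ => ?_)
      (fun x y hx hy => by rw [smul_add]; exact Submodule.add_mem _ hx hy)
    rw [← mul_smul]
    exact Submodule.smul_mem_smul (hs c hc) trivial
  by_cases ha : ∀ c ∈ I, a * c ∈ J
  · exact Or.inl (step a ha)
  push_neg at ha
  obtain ⟨c₁, hc₁I, hac₁⟩ := ha
  have hbc₁ : b * c₁ ∈ J := by
    rcases h2 a b c₁ (key c₁ hc₁I) with h' | h' | h'
    · exact absurd h' hab
    · exact absurd h' hac₁
    · exact h'
  refine Or.inr (Or.inl (step b fun c hc => ?_))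
  rcases h2 a b c (key c hc) with h' | h' | h'
  · exact absurd h' hab
  · -- a*c ∈ J; use c₁ + c
    rcases h2 a b (c₁ + c) (key _ (I.add_mem hc₁I hc)) with h'' | h'' | h''
    · exact absurd h'' hab
    · exfalso
      apply hac₁
      have : a * c₁ = a * (c₁ + c) - a * c := by ring
      rw [this]; exact J.sub_mem h'' h'
    · have : b * c = b * (c₁ + c) - b * c₁ := by ring
      rw [this]; exact J.sub_mem h'' hbc₁
  · exact h'
end

section
/- Let M be a multiplication R-module and K, N submodules of M. Then √(KN :_R M) = √(K :_R M) ∩ √(N :_R M), where KN is the product of submodules. -/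
open Submodule

variable {R : Type*} [CommRing R] {M : Type*} [AddCommGroup M] [Module R M]

theorem stmt15 (hM : IsMultiplicationModule R M) (I J : Ideal R)
    (K N : Submodule R M) (hK : K = I • (⊤ : Submodule R M))
    (hN : N = J • (⊤ : Submodule R M)) :
    (((I * J) • (⊤ : Submodule R M)).colon ⊤).radical =
      (K.colon ⊤).radical ⊓ (N.colon ⊤).radical := by
  apply le_antisymm
  · refine le_inf ?_ ?_ <;> apply Ideal.radical_mono <;> apply Submodule.colon_mono _ le_rfl
    · rw [hK, mul_smul]
      exact Submodule.smul_mono le_rfl le_top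
    · rw [hN, mul_comm, mul_smul]
      exact Submodule.smul_mono le_rfl le_top
  · rintro a ⟨ha1, ha2⟩
    obtain ⟨n, hn⟩ := ha1
    obtain ⟨m, hm⟩ := ha2
    refine ⟨n + m, Submodule.mem_colon.mpr fun x _ => ?_⟩
    have hx : a ^ m • x ∈ J • (⊤ : Submodule R M) := by
      rw [← hN]; exact Submodule.mem_colon.mp hm x trivial
    have key : ∀ y ∈ J • (⊤ : Submodule R M),
        a ^ n • y ∈ (I * J) • (⊤ : Submodule R M) := by
      intro y hy
      refine Submodule.smul_induction_on hy ?_ ?_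
      · intro j hj z _
        rw [smul_comm]
        have hz : a ^ n • z ∈ I • (⊤ : Submodule R M) := by
          rw [← hK]; exact Submodule.mem_colon.mp hn z trivial
        have : j • (a ^ n • z) ∈ J • (I • (⊤ : Submodule R M)) :=
          Submodule.smul_mem_smul hj hz
        rwa [← mul_smul, mul_comm] at this
      · intro y z hy hz
        rw [smul_add]; exact Submodule.add_mem _ hy hz
    rw [pow_add, mul_smul (a ^ n) (a ^ m) x]
    exact key _ hx
end

section
/- Let M be a multiplication R-module and N₁, ..., Nₙ be 2-absorbing primary submodules of M all having the same M-radical. Then N = ∩ᵢ Nᵢ is a 2-absorbing primary submodule of M. -/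
open Submodule

variable {R : Type*} [CommRing R] {M : Type*} [AddCommGroup M] [Module R M]

lemma prime_smul_le' {P : Submodule R M} (hP : IsPrimeSubmodule P) {I : Ideal R}
    {K : Submodule R M} (h : I • K ≤ P) : K ≤ P ∨ I ≤ P.colon ⊤ := by
  by_cases hI : I ≤ P.colon ⊤
  · exact Or.inr hI
  · left
    obtain ⟨a, haI, haP⟩ := SetLike.not_le_iff_exists.mp hI
    intro m hm
    rcases hP.2 a m (h (Submodule.smul_mem_smul haI hm)) with h1 | h2
    · exact h1
    · exact absurd h2 haP

lemma prime_prod_le' {P : Submodule R M} (hP : IsPrimeSubmodule P) {n : ℕ}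
    (I : Fin n → Ideal R) (s : Finset (Fin n))
    (h : (∏ i ∈ s, I i) • (⊤ : Submodule R M) ≤ P) :
    ∃ i ∈ s, I i • (⊤ : Submodule R M) ≤ P := by
  induction s using Finset.induction with
  | empty =>
    simp only [Finset.prod_empty, Ideal.one_eq_top, Submodule.top_smul] at h
    exact absurd (top_unique h) hP.1
  | @insert j t hj ih =>
    rw [Finset.prod_insert hj, mul_smul] at h
    rcases prime_smul_le' hP h with h1 | h2
    · obtain ⟨i, hi, hle⟩ := ih h1
      exact ⟨i, Finset.mem_insert_of_mem hi, hle⟩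
    · refine ⟨j, Finset.mem_insert_self j t, ?_⟩
      rw [Submodule.smul_le]
      intro a ha m hm
      exact Submodule.mem_colon.mp (h2 ha) m hm

theorem stmt16 (hM : IsMultiplicationModule R M) {n : ℕ} (hn : 0 < n)
    (N : Fin n → Submodule R M) (h : ∀ i, Is2AbsorbingPrimary (N i))
    (hrad : ∀ i j, mRad (N i) = mRad (N j)) :
    Is2AbsorbingPrimary (⨅ i, N i) := by
  classical
  set i0 : Fin n := ⟨0, hn⟩
  choose I hI using fun j => hM (N j)
  have hrad' : ∀ i, mRad (⨅ j, N j) = mRad (N i) := by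
    intro i
    apply le_antisymm
    · apply sInf_le_sInf
      rintro P ⟨hP1, hP2⟩
      exact ⟨hP1, le_trans (iInf_le N i) hP2⟩
    · apply le_sInf
      rintro P ⟨hPp, hPle⟩
      have hprod : (∏ j, I j) • (⊤ : Submodule R M) ≤ P := by
        have h1 : (∏ j, I j) • (⊤ : Submodule R M) ≤ ⨅ j, N j := by
          refine le_iInf fun j => ?_
          rw [hI j]
          exact Submodule.smul_mono_left
            (le_trans Ideal.prod_le_inf (Finset.inf_le (Finset.mem_univ j)))
        exact le_trans h1 hPle
      obtain ⟨j, _, hle⟩ := prime_prod_le' hPp I Finset.univ hprod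
      rw [← hI j] at hle
      exact le_trans (le_of_eq (hrad i j)) (sInf_le ⟨hPp, hle⟩)
  constructor
  · intro heq
    exact (h i0).1 (top_unique (heq ▸ iInf_le N i0))
  · intro a b m hm
    by_cases H : ∀ i, a * b ∈ (N i).colon ⊤
    · refine Or.inr (Or.inr ?_)
      rw [Submodule.mem_colon]
      intro x hx
      exact Submodule.mem_iInf _ |>.mpr fun i => Submodule.mem_colon.mp (H i) x hx
    · push_neg at H
      obtain ⟨i, hi⟩ := H
      rcases (h i).2 a b m ((Submodule.mem_iInf _).mp hm i) with h1 | h2 | h3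
      · exact Or.inl ((hrad' i) ▸ h1)
      · exact Or.inr (Or.inl ((hrad' i) ▸ h2))
      · exact absurd h3 hi
end

section
/- Let f : M → M' be a surjective homomorphism of R-modules and N a 2-absorbing primary submodule of M containing ker(f). Then f(N) is a 2-absorbing primary submodule of M'. -/
open Submodule

variable {R : Type*} [CommRing R] {M : Type*} [AddCommGroup M] [Module R M]

lemma prime_map_aux {M' : Type*} [AddCommGroup M'] [Module R M']
    (f : M →ₗ[R] M') (hf : Function.Surjective f) (P : Submodule R M)
    (hP : IsPrimeSubmodule P) (hker : LinearMap.ker f ≤ P) :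
    IsPrimeSubmodule (P.map f) := by
  obtain ⟨hne, hp⟩ := hP
  constructor
  · intro h
    apply hne
    have := congrArg (Submodule.comap f) h
    rw [Submodule.comap_map_eq, Submodule.comap_top, sup_eq_left.2 hker] at this
    exact this
  · rintro a m' ham'
    obtain ⟨m, rfl⟩ := hf m'
    obtain ⟨x, hx, hxe⟩ := ham'
    have ham : a • m ∈ P := by
      have : a • m - x ∈ LinearMap.ker f := by
        simp [LinearMap.mem_ker, map_sub, hxe]
      have := P.add_mem (hker this) hx
      simpa using this
    rcases hp a m ham with h | h
    · exact Or.inl ⟨m, h, rfl⟩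
    · refine Or.inr ?_
      rw [Submodule.mem_colon] at h ⊢
      rintro y' -
      obtain ⟨y, rfl⟩ := hf y'
      exact ⟨a • y, h y trivial, by simp⟩

lemma prime_comap_aux {M' : Type*} [AddCommGroup M'] [Module R M']
    (f : M →ₗ[R] M') (hf : Function.Surjective f) (Q : Submodule R M')
    (hQ : IsPrimeSubmodule Q) : IsPrimeSubmodule (Q.comap f) := by
  obtain ⟨hne, hq⟩ := hQ
  constructor
  · intro h
    apply hne
    have := congrArg (Submodule.map f) h
    rwa [Submodule.map_comap_eq_of_surjective hf, Submodule.map_top,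
      LinearMap.range_eq_top.2 hf] at this
  · intro a m ham
    have : a • f m ∈ Q := by simpa using ham
    rcases hq a (f m) this with h | h
    · exact Or.inl h
    · refine Or.inr ?_
      rw [Submodule.mem_colon] at h ⊢
      intro y _
      simpa using h (f y) trivial

lemma map_mRad_aux {M' : Type*} [AddCommGroup M'] [Module R M']
    (f : M →ₗ[R] M') (hf : Function.Surjective f) (N : Submodule R M)
    (hker : LinearMap.ker f ≤ N) : (mRad N).map f = mRad (N.map f) := by
  apply le_antisymm
  · intro y hy
    rw [mRad, Submodule.mem_sInf]
    rintro Q ⟨hQp, hQle⟩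
    obtain ⟨x, hx, rfl⟩ := hy
    have hcomap : IsPrimeSubmodule (Q.comap f) := prime_comap_aux f hf Q hQp
    have hNle : N ≤ Q.comap f := fun n hn => hQle ⟨n, hn, rfl⟩
    exact Submodule.mem_sInf.1 hx _ ⟨hcomap, hNle⟩
  · have h1 : (mRad (N.map f)).comap f ≤ mRad N := by
      rw [mRad, mRad]
      intro x hx
      rw [Submodule.mem_sInf]
      rintro P ⟨hPp, hPle⟩
      have hkerP : LinearMap.ker f ≤ P := le_trans hker hPle
      have hmapP : IsPrimeSubmodule (P.map f) := prime_map_aux f hf P hPp hkerP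
      have : f x ∈ P.map f := by
        have := Submodule.mem_comap.1 hx
        rw [Submodule.mem_sInf] at this
        exact this _ ⟨hmapP, Submodule.map_mono hPle⟩
      obtain ⟨p, hp, hpe⟩ := this
      have : x - p ∈ LinearMap.ker f := by simp [LinearMap.mem_ker, map_sub, hpe]
      have := P.add_mem (hkerP this) hp
      simpa using this
    calc mRad (N.map f) = ((mRad (N.map f)).comap f).map f := by
          rw [Submodule.map_comap_eq_of_surjective hf]
      _ ≤ (mRad N).map f := Submodule.map_mono h1

theorem stmt18 {M' : Type*} [AddCommGroup M'] [Module R M']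
    (f : M →ₗ[R] M') (hf : Function.Surjective f) (N : Submodule R M)
    (hN : Is2AbsorbingPrimary N) (hker : LinearMap.ker f ≤ N) :
    Is2AbsorbingPrimary (N.map f) := by
  obtain ⟨hne, h2⟩ := hN
  constructor
  · intro h
    apply hne
    have := congrArg (Submodule.comap f) h
    rwa [Submodule.comap_map_eq, Submodule.comap_top, sup_eq_left.2 hker] at this
  · intro a b m' hab
    obtain ⟨m, rfl⟩ := hf m'
    obtain ⟨x, hx, hxe⟩ := hab
    have habm : (a * b) • m ∈ N := by
      have : (a * b) • m - x ∈ LinearMap.ker f := by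
        simp [LinearMap.mem_ker, map_sub, hxe]
      have := N.add_mem (hker this) hx
      simpa using this
    rcases h2 a b m habm with h | h | h
    · left
      rw [← map_mRad_aux f hf N hker]
      exact ⟨a • m, h, by simp⟩
    · right; left
      rw [← map_mRad_aux f hf N hker]
      exact ⟨b • m, h, by simp⟩
    · right; right
      rw [Submodule.mem_colon] at h ⊢
      rintro y' -
      obtain ⟨y, rfl⟩ := hf y'
      exact ⟨(a * b) • y, h y trivial, by simp⟩
end

section
/- Let K ⊂ N ⊂ M be submodules of an R-module M. If K is a 2-absorbing primary submodule of M and N/K is a weakly 2-absorbing primary submodule of M/K, then N is a 2-absorbing primary submodule of M. -/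
open Submodule

variable {R : Type*} [CommRing R] {M : Type*} [AddCommGroup M] [Module R M]

/-- Weakly 2-absorbing primary submodule. -/
def IsWeakly2AbsorbingPrimary (N : Submodule R M) : Prop :=
  N ≠ ⊤ ∧ ∀ (a b : R) (m : M), (a * b) • m ∈ N → (a * b) • m ≠ 0 →
    a • m ∈ mRad N ∨ b • m ∈ mRad N ∨ a * b ∈ N.colon ⊤

lemma mRad_mono {K N : Submodule R M} (h : K ≤ N) : mRad K ≤ mRad N := by
  apply sInf_le_sInf
  intro P hP
  exact ⟨hP.1, h.trans hP.2⟩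

lemma map_prime {K P : Submodule R M} (hKP : K ≤ P) (hP : IsPrimeSubmodule P) :
    IsPrimeSubmodule (P.map K.mkQ) := by
  have hcomap : (P.map K.mkQ).comap K.mkQ = P := by
    rw [Submodule.comap_map_eq, K.ker_mkQ, sup_eq_left.2 hKP]
  constructor
  · intro htop
    apply hP.1
    rw [← hcomap, htop, comap_top]
  · intro a x hax
    obtain ⟨x, rfl⟩ := K.mkQ_surjective x
    have : a • x ∈ P := by
      rw [← hcomap, mem_comap, map_smul]
      exact hax
    rcases hP.2 a x this with h | h
    · exact Or.inl ⟨x, h, rfl⟩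
    · right
      rw [Submodule.mem_colon]
      rintro y -
      obtain ⟨y, rfl⟩ := K.mkQ_surjective y
      rw [← map_smul]
      exact ⟨a • y, Submodule.mem_colon.1 h y trivial, rfl⟩

lemma mRad_quot {K N : Submodule R M} (hKN : K ≤ N) {x : M}
    (h : K.mkQ x ∈ mRad (N.map K.mkQ)) : x ∈ mRad N := by
  rw [mRad, Submodule.mem_sInf]
  rintro P ⟨hP, hNP⟩
  have hKP : K ≤ P := hKN.trans hNP
  have h2 : K.mkQ x ∈ P.map K.mkQ := by
    rw [mRad, Submodule.mem_sInf] at h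
    exact h _ ⟨map_prime hKP hP, Submodule.map_mono hNP⟩
  have hcomap : (P.map K.mkQ).comap K.mkQ = P := by
    rw [Submodule.comap_map_eq, K.ker_mkQ, sup_eq_left.2 hKP]
  rw [← hcomap]
  exact h2

theorem stmt19 (K N : Submodule R M) (hKN : K < N) (hNM : N < ⊤)
    (hK : Is2AbsorbingPrimary K)
    (hNK : IsWeakly2AbsorbingPrimary (N.map K.mkQ)) :
    Is2AbsorbingPrimary N := by
  refine ⟨hNM.ne, fun a b m habm => ?_⟩
  by_cases hk : (a * b) • m ∈ K
  · rcases hK.2 a b m hk with h | h | h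
    · exact Or.inl (mRad_mono hKN.le h)
    · exact Or.inr (Or.inl (mRad_mono hKN.le h))
    · refine Or.inr (Or.inr ?_)
      rw [Submodule.mem_colon] at h ⊢
      exact fun p hp => hKN.le (h p hp)
  · have h1 : (a * b) • K.mkQ m ∈ N.map K.mkQ := by
      rw [← map_smul]
      exact ⟨_, habm, rfl⟩
    have h2 : (a * b) • K.mkQ m ≠ 0 := by
      rw [← map_smul, Submodule.mkQ_apply, Ne, Submodule.Quotient.mk_eq_zero]
      exact hk
    rcases hNK.2 a b (K.mkQ m) h1 h2 with h | h | h
    · rw [← map_smul] at h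
      exact Or.inl (mRad_quot hKN.le h)
    · rw [← map_smul] at h
      exact Or.inr (Or.inl (mRad_quot hKN.le h))
    · refine Or.inr (Or.inr ?_)
      rw [Submodule.mem_colon] at h ⊢
      intro p hp
      have := h (K.mkQ p) trivial
      rw [← map_smul] at this
      obtain ⟨y, hy, hyx⟩ := this
      have : (a * b) • p - y ∈ K := by
        rw [← Submodule.Quotient.mk_eq_zero K]
        simp only [Submodule.Quotient.mk_sub]
        change K.mkQ _ - K.mkQ _ = 0
        rw [hyx, sub_self]
      have := Submodule.add_mem N (hKN.le this) hy
      simpa using this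
end
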